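/- arXiv:1702.08830 — 2 statements merged into one kernel-verified Lean document; each statement's English description precedes it below -/
import Mathlib

section
/- The transition operator t := (|a⟩⟨a| + |b⟩⟨b|)⊗1 − |a⟩⟨b|⊗U − |b⟩⟨a|⊗U† is positive semi-definite. -/
open Matrix Kronecker
open scoped ComplexOrder

/-!
Writing `⟨v|` for the row `vecMulVec 1 (star v)`, the operator `t` is the Gram operator `Xᴴ * X`
of `X = ⟨a| ⊗ 1 - ⟨b| ⊗ U`: expanding `Xᴴ * X` gives `t` once `|b⟩⟨b| ⊗ Uᴴ U` is replaced by
`|b⟩⟨b| ⊗ 1` using unitarity.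
-/

namespace Matrix

variable {n p q R : Type*} [Fintype p] [CommRing R] [StarRing R]

-- Without the type ascription, `*` elaborates through the `CStarMatrix` multiplication.
theorem conjTranspose_mul_self_bra_kronecker_sub (a b : n → R) (A B : Matrix p q R) :
    (vecMulVec (1 : Unit → R) (star a) ⊗ₖ A - vecMulVec 1 (star b) ⊗ₖ B)ᴴ *
        (vecMulVec 1 (star a) ⊗ₖ A - vecMulVec 1 (star b) ⊗ₖ B : Matrix (Unit × p) (n × q) R) =
      vecMulVec a (star a) ⊗ₖ (Aᴴ * A) - vecMulVec a (star b) ⊗ₖ (Aᴴ * B)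
        - vecMulVec b (star a) ⊗ₖ (Bᴴ * A) + vecMulVec b (star b) ⊗ₖ (Bᴴ * B) := by
  simp only [conjTranspose_sub, conjTranspose_kronecker, conjTranspose_vecMulVec, star_star,
    star_one, Matrix.sub_mul, Matrix.mul_sub, ← mul_kronecker_mul, vecMulVec_mul_vecMulVec,
    one_dotProduct_one, Fintype.card_unit, Nat.cast_one, one_smul]
  abel

theorem posSemidef_vecMulVec_kronecker_gram [Finite n] [Finite q] [PartialOrder R]
    [StarOrderedRing R]
    (a b : n → R) (A B : Matrix p q R) :
    PosSemidef (vecMulVec a (star a) ⊗ₖ (Aᴴ * A) - vecMulVec a (star b) ⊗ₖ (Aᴴ * B)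
      - vecMulVec b (star a) ⊗ₖ (Bᴴ * A) + vecMulVec b (star b) ⊗ₖ (Bᴴ * B)) :=
  conjTranspose_mul_self_bra_kronecker_sub a b A B ▸ posSemidef_conjTranspose_mul_self _

end Matrix

theorem transition_term_posSemidef_general
    {m q : ℕ}
    (a b : Fin m → ℂ)
    (U : Matrix (Fin q) (Fin q) ℂ) (hU : U ∈ Matrix.unitaryGroup (Fin q) ℂ) :
    Matrix.PosSemidef
      ((Matrix.vecMulVec a (star a) + Matrix.vecMulVec b (star b)) ⊗ₖ
          (1 : Matrix (Fin q) (Fin q) ℂ)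
        - (Matrix.vecMulVec a (star b)) ⊗ₖ U
        - (Matrix.vecMulVec b (star a)) ⊗ₖ Uᴴ) := by
  have hUU : Uᴴ * U = 1 := (mem_unitaryGroup_iff' (A := U)).mp hU
  have hgram := posSemidef_vecMulVec_kronecker_gram a b 1 U
  simp only [conjTranspose_one, one_mul, mul_one, hUU] at hgram
  have hsplit : (vecMulVec a (star a) + vecMulVec b (star b)) ⊗ₖ (1 : Matrix (Fin q) (Fin q) ℂ)
        - vecMulVec a (star b) ⊗ₖ U - vecMulVec b (star a) ⊗ₖ Uᴴ
      = vecMulVec a (star a) ⊗ₖ 1 - vecMulVec a (star b) ⊗ₖ U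
        - vecMulVec b (star a) ⊗ₖ Uᴴ + vecMulVec b (star b) ⊗ₖ 1 := by
    rw [add_kronecker]
    abel
  rwa [hsplit]

/-- The transition operator
`t := (|a⟩⟨a| + |b⟩⟨b|)⊗1 − |a⟩⟨b|⊗U − |b⟩⟨a|⊗U†`
(for orthonormal `|a⟩,|b⟩` and unitary `U`) is positive semi-definite. -/
theorem transition_term_posSemidef
    {m q : ℕ}
    (a b : Fin m → ℂ)
    (ha : star a ⬝ᵥ a = 1) (hb : star b ⬝ᵥ b = 1) (hab : star a ⬝ᵥ b = 0)
    (U : Matrix (Fin q) (Fin q) ℂ) (hU : U ∈ Matrix.unitaryGroup (Fin q) ℂ) :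
    Matrix.PosSemidef
      ((Matrix.vecMulVec a (star a) + Matrix.vecMulVec b (star b)) ⊗ₖ
          (1 : Matrix (Fin q) (Fin q) ℂ)
        - (Matrix.vecMulVec a (star b)) ⊗ₖ U
        - (Matrix.vecMulVec b (star a)) ⊗ₖ Uᴴ) :=
  transition_term_posSemidef_general a b U hU
end

section
/- The history state Hamiltonian H_prop := Σ_{t=0}^{T−1} Σ_j (|t⟩⊗|j⟩ − |t+1⟩⊗U_t|j⟩)(h.c.) on C^{T+1}⊗(C^d)^{⊗n} has kernel exactly the span of states of the form |Ψ⟩ = Σ_{t=0}^{T} |t⟩⊗U_t···U_1|φ⟩ for |φ⟩ ∈ (C^d)^{⊗n}. -/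
/-
`H_prop = BᴴB`, where the rows of `B` are the conjugates of the vectors
`|t⟩|j⟩ − |t+1⟩U_t|j⟩`, so `H_prop v = 0` iff `v` is orthogonal to all of them, i.e. iff
`v_t = U_tᴴ v_{t+1}` for every `t`. By unitarity this is the recurrence `v_{t+1} = U_t v_t`,
whose solutions are exactly the history states of `v_0`. These form the range of a linear map,
so they are their own span.
-/

open Matrix

variable {T n d : ℕ}

/-- The partial product `U_k ⋯ U_1` of the circuit unitaries (`U_0` interpreted as `1`). -/
noncomputable def prodU (U : Fin T → Matrix (Fin n → Fin d) (Fin n → Fin d) ℂ) :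
    ℕ → Matrix (Fin n → Fin d) (Fin n → Fin d) ℂ
  | 0 => 1
  | k + 1 => (if h : k < T then U ⟨k, h⟩ else 1) * prodU U k

/-- The vector `|t⟩⊗|j⟩ − |t+1⟩⊗U_{t+1}|j⟩` on `ℂ^{T+1} ⊗ (ℂ^d)^{⊗n}`,
with `{|j⟩}` the standard (orthonormal) basis of `(ℂ^d)^{⊗n}`. -/
noncomputable def histVec (U : Fin T → Matrix (Fin n → Fin d) (Fin n → Fin d) ℂ)
    (t : Fin T) (j : Fin n → Fin d) : Fin (T + 1) × (Fin n → Fin d) → ℂ :=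
  fun p =>
    (if p.1 = t.castSucc then (if p.2 = j then 1 else 0) else 0) -
      (if p.1 = t.succ then (U t).mulVec (fun y => if y = j then 1 else 0) p.2 else 0)

/-- The history state Hamiltonian
`H_prop := Σ_{t=0}^{T−1} Σ_j (|t⟩⊗|j⟩ − |t+1⟩⊗U_{t+1}|j⟩)(h.c.)`. -/
noncomputable def Hprop (U : Fin T → Matrix (Fin n → Fin d) (Fin n → Fin d) ℂ) :
    Matrix (Fin (T + 1) × (Fin n → Fin d)) (Fin (T + 1) × (Fin n → Fin d)) ℂ :=
  ∑ t : Fin T, ∑ j : Fin n → Fin d,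
    Matrix.vecMulVec (histVec U t j) (star (histVec U t j))

/-- The history state `|Ψ⟩ = Σ_{t=0}^{T} |t⟩ ⊗ U_t⋯U_1|φ⟩` for initial state `|φ⟩`. -/
noncomputable def historyState (U : Fin T → Matrix (Fin n → Fin d) (Fin n → Fin d) ℂ)
    (φ : (Fin n → Fin d) → ℂ) : Fin (T + 1) × (Fin n → Fin d) → ℂ :=
  fun p => (prodU U (p.1 : ℕ)).mulVec φ p.2

namespace Matrix

variable {ι m R : Type*} [Fintype ι] [Fintype m]

theorem sum_vecMulVec_star_mulVec_eq_zero_iff [PartialOrder R] [NonUnitalRing R] [StarRing R]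
    [StarOrderedRing R] [NoZeroDivisors R] (a : ι → m → R) (v : m → R) :
    (∑ i, vecMulVec (a i) (star (a i))) *ᵥ v = 0 ↔ ∀ i, star (a i) ⬝ᵥ v = 0 := by
  have hgram : ∑ i, vecMulVec (a i) (star (a i)) =
      (of fun i => star (a i))ᴴ * of fun i => star (a i) := by
    ext p q
    simp [mul_apply, vecMulVec_apply, sum_apply]
  rw [hgram, conjTranspose_mul_self_mulVec_eq_zero, funext_iff]
  rfl

theorem conjTranspose_mulVec_eq_iff_of_mem_unitaryGroup [CommRing R] [StarRing R]
    [DecidableEq m] {A : Matrix m m R} (hA : A ∈ unitaryGroup m R) (x y : m → R) :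
    Aᴴ *ᵥ y = x ↔ y = A *ᵥ x := by
  constructor
  · rintro rfl
    rw [mulVec_mulVec, ← star_eq_conjTranspose, mem_unitaryGroup_iff.mp hA, one_mulVec]
  · rintro rfl
    rw [mulVec_mulVec, ← star_eq_conjTranspose, mem_unitaryGroup_iff'.mp hA, one_mulVec]

end Matrix

section History

variable (U : Fin T → Matrix (Fin n → Fin d) (Fin n → Fin d) ℂ)

theorem star_histVec_dotProduct (t : Fin T) (j : Fin n → Fin d)
    (v : Fin (T + 1) × (Fin n → Fin d) → ℂ) :
    star (histVec U t j) ⬝ᵥ v =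
      Function.curry v t.castSucc j - ((U t)ᴴ *ᵥ Function.curry v t.succ) j := by
  simp [histVec, dotProduct, mulVec, Fintype.sum_prod_type, sub_mul, Finset.sum_sub_distrib,
    apply_ite (starRingEnd ℂ), ite_mul]

open scoped ComplexOrder in
theorem Hprop_mulVec_eq_zero_iff (hU : ∀ t, U t ∈ Matrix.unitaryGroup (Fin n → Fin d) ℂ)
    (v : Fin (T + 1) × (Fin n → Fin d) → ℂ) :
    Hprop U *ᵥ v = 0 ↔
      ∀ t, Function.curry v t.succ = U t *ᵥ Function.curry v t.castSucc := by
  rw [Hprop, ← Fintype.sum_prod_type', sum_vecMulVec_star_mulVec_eq_zero_iff]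
  simp only [Prod.forall, star_histVec_dotProduct, sub_eq_zero]
  refine forall_congr' fun t => ?_
  rw [← funext_iff, eq_comm, conjTranspose_mulVec_eq_iff_of_mem_unitaryGroup (hU t)]

theorem prodU_succ (t : Fin T) : prodU U (t + 1) = U t * prodU U t := by
  rw [prodU, dif_pos t.isLt]

noncomputable def historyStateₗ :
    ((Fin n → Fin d) → ℂ) →ₗ[ℂ] Fin (T + 1) × (Fin n → Fin d) → ℂ where
  toFun := historyState U
  map_add' φ ψ := by ext p; simp [historyState, mulVec_add]
  map_smul' c φ := by ext p; simp [historyState, mulVec_smul]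

theorem mem_span_range_historyState_iff (v : Fin (T + 1) × (Fin n → Fin d) → ℂ) :
    v ∈ Submodule.span ℂ (Set.range (historyState U)) ↔ v ∈ Set.range (historyState U) := by
  have hrange : Set.range (historyState U) = (historyStateₗ U).range :=
    (historyStateₗ U).coe_range.symm
  rw [hrange, Submodule.span_eq, SetLike.mem_coe]

theorem mem_range_historyState_iff (v : Fin (T + 1) × (Fin n → Fin d) → ℂ) :
    v ∈ Set.range (historyState U) ↔
      ∀ t, Function.curry v t.succ = U t *ᵥ Function.curry v t.castSucc := by
  constructor
  · rintro ⟨φ, rfl⟩ t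
    exact (congrArg (· *ᵥ φ) (prodU_succ U t)).trans (mulVec_mulVec _ _ _).symm
  · intro h
    refine ⟨Function.curry v 0, funext fun p => ?_⟩
    suffices ∀ i : Fin (T + 1), prodU U i *ᵥ Function.curry v 0 = Function.curry v i from
      congrFun (this p.1) p.2
    intro i
    induction i using Fin.induction with
    | zero => exact one_mulVec _
    | succ t ih =>
      rw [Fin.val_castSucc] at ih
      rw [Fin.val_succ, prodU_succ, ← mulVec_mulVec, ih, h]

end History

theorem kernel_Hprop_general
    (U : Fin T → Matrix (Fin n → Fin d) (Fin n → Fin d) ℂ)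
    (hU : ∀ t, U t ∈ Matrix.unitaryGroup (Fin n → Fin d) ℂ)
    (v : Fin (T + 1) × (Fin n → Fin d) → ℂ) :
    (Hprop U).mulVec v = 0 ↔
      v ∈ Submodule.span ℂ (Set.range (historyState U)) := by
  rw [mem_span_range_historyState_iff, mem_range_historyState_iff, Hprop_mulVec_eq_zero_iff U hU]

/-- The kernel of the history state Hamiltonian `H_prop` on `ℂ^{T+1} ⊗ (ℂ^d)^{⊗n}` is
exactly the span of the history states `Σ_{t=0}^T |t⟩ ⊗ U_t⋯U_1|φ⟩`. -/
theorem kernel_Hprop (hT : 1 ≤ T)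
    (U : Fin T → Matrix (Fin n → Fin d) (Fin n → Fin d) ℂ)
    (hU : ∀ t, U t ∈ Matrix.unitaryGroup (Fin n → Fin d) ℂ)
    (v : Fin (T + 1) × (Fin n → Fin d) → ℂ) :
    (Hprop U).mulVec v = 0 ↔
      v ∈ Submodule.span ℂ (Set.range (historyState U)) :=
  kernel_Hprop_general U hU v
end
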